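/- Suppose the presentation ⟨X|R⟩ is side-confluent, let φ be the normal-form map, let n ≥ 0 and m ≥ l_N(n), let k ≥ 1 satisfy ⟨F_1^{n,m},F_2^{n,m}⟩^k = ⟨F_2^{n,m},F_1^{n,m}⟩^k, and set Γ^{n,m} = (id − F_2^{n,m})·Σ_{i odd, 1 ≤ i ≤ k−1} ⟨F_2^{n,m},F_1^{n,m}⟩^i ∈ End(V^{⊗m}). If m ≥ l_N(n+1), then the image of Γ^{n,m} is contained in φ(V^{⊗m−l_N(n+1)}) ⊗ J_{n+1} (the span of w·f with w a normal word of length m−l_N(n+1) and f ∈ J_{n+1}); if m < l_N(n+1), then Γ^{n,m} = 0. -/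

import Mathlib

/-!
Every summand of `Γ` has the form `(id − T2)(T1 x)`. The words occurring in `T1 x` are fixed by
`T1`, and a word of length `m` fixed by `T1` has an irreducible prefix of length `m − l_N(n)`:
otherwise it is the leading word of an element `a·g·b·v` of `ker T1 = I(R)_{m−l_N(n)} ⊗ V^{⊗l_N(n)}`.
The words occurring in `T2 (T1 x)` are fixed by `T2`. Hence `z = (id − T2)(T1 x)` lies in
`ker T2 = V^{⊗d} ⊗ J_{n+1}`, `d = m − l_N(n+1)`, and its leading word, which `T2` cannot fix,
begins with an irreducible word `u` of length `d`. Subtracting `u · (u⁻¹ z) ∈ φ(V^{⊗d}) ⊗ J_{n+1}`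
kills every word of `z` beginning with `u` and preserves these properties, so induction on the
size of the support concludes. If `m < l_N(n+1)`, then `T2 = id` and `Γ = 0`.
-/

open scoped TensorProduct
set_option linter.unusedSectionVars false

def altProd {A : Type*} [Monoid A] (t s : A) (k : ℕ) : A :=
  if Even k then (t * s) ^ (k / 2) else s * (t * s) ^ (k / 2)

namespace CC

variable (K : Type*) [Field K] (X : Type*) [Fintype X] [LinearOrder X]

abbrev F : Type _ := MonoidAlgebra K (FreeMonoid X)

noncomputable def wd (w : FreeMonoid X) : F K X := MonoidAlgebra.of K (FreeMonoid X) w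

def wlen (w : FreeMonoid X) : ℕ := (FreeMonoid.toList w).length

noncomputable instance : LinearOrder (FreeMonoid X) :=
  LinearOrder.lift' (fun w => FreeMonoid.toList w) (fun _ _ h => FreeMonoid.toList.injective h)

noncomputable def lm (f : F K X) : FreeMonoid X := (f.coeff.support.max).unbotD 1

/-- The homogeneous component `V^{⊗m} = KX^{(m)}` of `K⟨X⟩`:
elements supported on words of length `m`. -/
noncomputable def degSub (m : ℕ) : Submodule K (F K X) where
  carrier := {f | ∀ w ∈ f.coeff.support, wlen X w = m}
  add_mem' := by
    intro a b ha hb w hw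
    rcases Finset.mem_union.mp (Finsupp.support_add hw) with h | h
    · exact ha w h
    · exact hb w h
  zero_mem' := by intro w hw; simp at hw
  smul_mem' := by intro c f hf w hw; exact hf w (Finsupp.support_smul hw)

lemma mem_degSub {m : ℕ} {f : F K X} :
    f ∈ degSub K X m ↔ ∀ w ∈ f.coeff.support, wlen X w = m := Iff.rfl

/-- `l_N(2k) = kN`, `l_N(2k+1) = kN + 1`. -/
def lN (N n : ℕ) : ℕ := if Even n then (n / 2) * N else (n / 2) * N + 1

/-- The homogeneous component `I(R)_m` of the two-sided ideal generated by `R`: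
`I(R)_m = Σ_{i=0}^{m−N} V^{⊗i}·R̄·V^{⊗m−N−i}` for `m ≥ N` and `I(R)_m = 0` for `m < N`. -/
noncomputable def idealPiece (N : ℕ) (R : Set (F K X)) (m : ℕ) : Submodule K (F K X) :=
  if m < N then ⊥
  else ⨆ i ∈ Finset.range (m - N + 1),
    degSub K X i * Submodule.span K R * degSub K X (m - N - i)

/-- The two-sided ideal `I(R)` of `K⟨X⟩` generated by `R`, as a `K`-subspace. -/
noncomputable def idealSpan (R : Set (F K X)) : Submodule K (F K X) :=
  Submodule.span K {x | ∃ u v : FreeMonoid X, ∃ g ∈ R, x = wd K X u * g * wd K X v}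

/-- `J_0 = K`, `J_1 = V`, and `J_n = ⋂_{i=0}^{l_N(n)−N} V^{⊗i}·R̄·V^{⊗l_N(n)−N−i}` for `n ≥ 2`. -/
noncomputable def Jspace (N : ℕ) (R : Set (F K X)) : ℕ → Submodule K (F K X)
  | 0 => degSub K X 0
  | 1 => degSub K X 1
  | (n + 2) => ⨅ i ∈ Finset.range (lN N (n + 2) - N + 1),
      degSub K X i * Submodule.span K R * degSub K X (lN N (n + 2) - N - i)

open Classical in
/-- The reduction `r_{u·g·v}` of the presentation `⟨X|R⟩`: the linear endomorphism of `K⟨X⟩`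
fixing every word other than `u·lm(g)·v` and sending `u·lm(g)·v` to `u·(lm(g)−g)·v`. -/
noncomputable def redMap (u : FreeMonoid X) (g : F K X) (v : FreeMonoid X) :
    F K X →ₗ[K] F K X :=
  Finsupp.linearCombination K (fun w : FreeMonoid X =>
    if w = u * lm K X g * v then wd K X u * (wd K X (lm K X g) - g) * wd K X v
    else wd K X w) ∘ₗ (MonoidAlgebra.coeffLinearEquiv K).toLinearMap

/-- `f` is a normal form for `⟨X|R⟩` if it is fixed by every reduction. -/
def IsNormalForm (R : Set (F K X)) (f : F K X) : Prop :=
  ∀ u v : FreeMonoid X, ∀ g ∈ R, redMap K X u g v f = f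

/-- `g` is a normal form of `f`: `g` is a normal form and is obtained from `f` by applying a
finite sequence of reductions of `⟨X|R⟩`. -/
def NormalFormOf (R : Set (F K X)) (f g : F K X) : Prop :=
  IsNormalForm K X R g ∧
    ∃ L : List (FreeMonoid X × F K X × FreeMonoid X),
      (∀ p ∈ L, p.2.1 ∈ R) ∧
      g = L.foldr (fun p h => redMap K X p.1 p.2.1 p.2.2 h) f

/-- The presentation `⟨X|R⟩` is reduced: for every `f ∈ R`, `lm(f) − f` is a normal form for
`⟨X|R⟩` and `lm(f)` is a normal form for `⟨X | R∖{f}⟩`. -/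
def Reduced (R : Set (F K X)) : Prop :=
  ∀ f ∈ R, IsNormalForm K X R (wd K X (lm K X f) - f) ∧
    IsNormalForm K X (R \ {f}) (wd K X (lm K X f))

/-- `R` consists of `N`-homogeneous elements with leading coefficient `1`. -/
def NHomogLC1 (N : ℕ) (R : Set (F K X)) : Prop :=
  ∀ f ∈ R, f ∈ degSub K X N ∧ f.coeff (lm K X f) = 1

open Classical in
/-- The operator `S` of the presentation `⟨X|R⟩`: the endomorphism of `V^{⊗N}` sending `lm(f)`
to `lm(f) − f` for every `f ∈ R` and fixing all other words (extended by the identity on words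
of other lengths). -/
noncomputable def Sop (R : Set (F K X)) : F K X →ₗ[K] F K X :=
  Finsupp.linearCombination K (fun w : FreeMonoid X =>
    if h : ∃ f ∈ R, lm K X f = w then wd K X w - h.choose else wd K X w) ∘ₗ
    (MonoidAlgebra.coeffLinearEquiv K).toLinearMap

/-- `S ⊗ id_{V^{⊗b}}` realized on `K⟨X⟩`: on a word of length `a + b`, apply `S` to the first
`a` letters and the identity to the last `b` letters; the identity on all other words. -/
noncomputable def applyLeft (S : F K X →ₗ[K] F K X) (a b : ℕ) : F K X →ₗ[K] F K X :=
  Finsupp.linearCombination K (fun w : FreeMonoid X =>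
    if wlen X w = a + b then
      S (wd K X (FreeMonoid.ofList ((FreeMonoid.toList w).take a))) *
        wd K X (FreeMonoid.ofList ((FreeMonoid.toList w).drop a))
    else wd K X w) ∘ₗ (MonoidAlgebra.coeffLinearEquiv K).toLinearMap

/-- `id_{V^{⊗a}} ⊗ S` realized on `K⟨X⟩`: on a word of length `a + b`, apply the identity to
the first `a` letters and `S` to the last `b` letters; the identity on all other words. -/
noncomputable def applyRight (S : F K X →ₗ[K] F K X) (a b : ℕ) : F K X →ₗ[K] F K X :=
  Finsupp.linearCombination K (fun w : FreeMonoid X =>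
    if wlen X w = a + b then
      wd K X (FreeMonoid.ofList ((FreeMonoid.toList w).take a)) *
        S (wd K X (FreeMonoid.ofList ((FreeMonoid.toList w).drop a)))
    else wd K X w) ∘ₗ (MonoidAlgebra.coeffLinearEquiv K).toLinearMap

/-- The presentation `⟨X|R⟩` is side-confluent: for every `1 ≤ m ≤ N−1` there exists `k ≥ 1`
with `⟨id_{V^{⊗m}}⊗S, S⊗id_{V^{⊗m}}⟩^k = ⟨S⊗id_{V^{⊗m}}, id_{V^{⊗m}}⊗S⟩^k` on `V^{⊗N+m}`. -/
def SideConfluent (N : ℕ) (R : Set (F K X)) : Prop :=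
  ∀ m : ℕ, 1 ≤ m → m ≤ N - 1 →
    ∃ k : ℕ, 1 ≤ k ∧
      ∀ f ∈ degSub K X (N + m),
        altProd (applyRight K X (Sop K X R) m N) (applyLeft K X (Sop K X R) N m) k f =
          altProd (applyLeft K X (Sop K X R) N m) (applyRight K X (Sop K X R) m N) k f

/-- The extra-condition: `(V^{⊗n}⊗R̄) ∩ (R̄⊗V^{⊗n}) ⊆ V^{⊗n−1}⊗R̄⊗V` for every `2 ≤ n ≤ N−1`. -/
def ExtraCondition (N : ℕ) (R : Set (F K X)) : Prop :=
  ∀ n : ℕ, 2 ≤ n → n ≤ N - 1 →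
    (degSub K X n * Submodule.span K R) ⊓ (Submodule.span K R * degSub K X n) ≤
      degSub K X (n - 1) * Submodule.span K R * degSub K X 1

/-- A reduction operator relative to `X^{(m)}`, realized as a linear endomorphism of `K⟨X⟩`
extended by the identity outside of `V^{⊗m}`: an idempotent operator fixing each word of
length `m` or mapping it to an element of `V^{⊗m}` all of whose monomials are strictly
smaller. -/
structure IsRedOp (m : ℕ) (T : F K X →ₗ[K] F K X) : Prop where
  idem : T ∘ₗ T = T
  le : ∀ w : FreeMonoid X, wlen X w = m →
    T (wd K X w) = wd K X w ∨
      (T (wd K X w) ∈ degSub K X m ∧ ∀ u ∈ (T (wd K X w)).coeff.support, u < w)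
  other : ∀ w : FreeMonoid X, wlen X w ≠ m → T (wd K X w) = wd K X w

/-- The kernel `I(R)_{m−l_N(n)} ⊗ V^{⊗l_N(n)}` of the reduction operator `F_1^{n,m}`. -/
noncomputable def ker1 (N : ℕ) (R : Set (F K X)) (n m : ℕ) : Submodule K (F K X) :=
  idealPiece K X N R (m - lN N n) * degSub K X (lN N n)

/-- The kernel of the reduction operator `F_2^{n,m}`: `⊥` if `m < l_N(n+1)` (so that
`F_2^{n,m} = id`), and `V^{⊗m−l_N(n+1)} ⊗ J_{n+1}` otherwise. -/
noncomputable def ker2 (N : ℕ) (R : Set (F K X)) (n m : ℕ) : Submodule K (F K X) :=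
  if m < lN N (n + 1) then ⊥
  else degSub K X (m - lN N (n + 1)) * Jspace K X N R (n + 1)

/-- The span of the normal words of length `d`, i.e. `φ(V^{⊗d})` where `φ` is the
normal-form map. -/
noncomputable def nfSub (R : Set (F K X)) (d : ℕ) : Submodule K (F K X) :=
  Submodule.span K
    {x | ∃ w : FreeMonoid X, wlen X w = d ∧ IsNormalForm K X R (wd K X w) ∧ x = wd K X w}

/-- `Γ = (id − T2)·Σ_{i odd, 1 ≤ i ≤ k−1} ⟨T2,T1⟩^i`, the image of the element `γ1` of the
confluence algebra under the `(T1,T2)`-representation. -/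
noncomputable def Gamma (T1 T2 : F K X →ₗ[K] F K X) (k : ℕ) : F K X →ₗ[K] F K X :=
  (1 - T2) * ∑ i ∈ (Finset.Icc 1 (k - 1)).filter (fun i => Odd i), altProd T2 T1 i

end CC

theorem altProd_of_odd {A : Type*} [Monoid A] (t s : A) {k : ℕ} (hk : Odd k) :
    altProd t s k = s * (t * s) ^ (k / 2) := by
  rw [altProd, if_neg (Nat.not_even_iff_odd.mpr hk)]

theorem List.Lex.append_of_length_eq {α : Type*} {r : α → α → Prop} {s t : List α}
    (hlen : s.length = t.length) (h : List.Lex r s t) (b c : List α) :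
    List.Lex r (s ++ b) (t ++ c) := by
  induction h with
  | nil => simp at hlen
  | rel hab => exact .rel hab
  | cons _ ih => exact .cons (ih (by simpa using hlen))

namespace CC

variable {K : Type*} [Field K] {X : Type*} [LinearOrder X]

theorem wlen_mul (u v : FreeMonoid X) : wlen X (u * v) = wlen X u + wlen X v := by
  simp [wlen]

theorem exists_eq_mul_of_le_wlen {w : FreeMonoid X} {d : ℕ} (h : d ≤ wlen X w) :
    ∃ u s : FreeMonoid X, w = u * s ∧ wlen X u = d := by
  refine ⟨.ofList (w.toList.take d), .ofList (w.toList.drop d), ?_, ?_⟩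
  · apply FreeMonoid.toList.injective
    simp
  · simpa [wlen] using h

theorem eq_of_mul_eq_mul_of_wlen_eq {p u s t : FreeMonoid X} (hlen : wlen X p = wlen X u)
    (h : p * s = u * t) : p = u :=
  FreeMonoid.toList.injective
    (List.append_inj (by simpa using congrArg FreeMonoid.toList h) hlen).1

theorem mul_le_mul_of_wlen_eq {s t : FreeMonoid X} (hlen : wlen X s = wlen X t) (h : s ≤ t)
    (p q : FreeMonoid X) : p * s * q ≤ p * t * q := by
  rcases h.lt_or_eq with h | rfl
  · have : List.Lex (· < ·) (p.toList ++ (s.toList ++ q.toList))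
        (p.toList ++ (t.toList ++ q.toList)) :=
      (List.Lex.append_of_length_eq hlen h _ _).append_left _ _
    refine le_of_lt (show List.Lex (· < ·) (p * s * q).toList (p * t * q).toList from ?_)
    simpa only [FreeMonoid.toList_mul, List.append_assoc] using this
  · rfl

theorem wd_eq_single (u : FreeMonoid X) : wd K X u = MonoidAlgebra.single u 1 := rfl

theorem wd_mul (u v : FreeMonoid X) : wd K X u * wd K X v = wd K X (u * v) :=
  (map_mul _ u v).symm

theorem support_wd (u : FreeMonoid X) : (wd K X u).coeff.support = {u} :=
  Finsupp.support_single u one_ne_zero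

theorem wd_mem_degSub (w : FreeMonoid X) : wd K X w ∈ degSub K X (wlen X w) := by
  intro u hu
  rw [support_wd, Finset.mem_singleton] at hu
  rw [hu]

theorem eq_sum_coeff_smul_wd (x : F K X) :
    x = ∑ w ∈ x.coeff.support, x.coeff w • wd K X w := by
  conv_lhs => rw [← MonoidAlgebra.sum_coeff_single x]
  simp [Finsupp.sum, wd_eq_single]

theorem support_nonempty {f : F K X} (h : f ≠ 0) : f.coeff.support.Nonempty :=
  Finsupp.support_nonempty_iff.mpr fun h' => h (MonoidAlgebra.coeff_injective h')

theorem lm_eq_max' {f : F K X} (h : f.coeff.support.Nonempty) :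
    lm K X f = f.coeff.support.max' h := by
  rw [lm, ← Finset.coe_max' h]
  rfl

theorem lm_mem_support {f : F K X} (h : f ≠ 0) : lm K X f ∈ f.coeff.support := by
  rw [lm_eq_max' (support_nonempty h)]
  exact Finset.max'_mem _ _

theorem le_lm {f : F K X} {w : FreeMonoid X} (hw : w ∈ f.coeff.support) : w ≤ lm K X f := by
  rw [lm_eq_max' ⟨w, hw⟩]
  exact Finset.le_max' _ _ hw

theorem coeff_wd_mul_mul_wd (g : F K X) (p s q : FreeMonoid X) :
    (wd K X p * g * wd K X q).coeff (p * s * q) = g.coeff s := by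
  simp [wd_eq_single]

theorem le_of_mem_support_wd_mul_mul_wd {g : F K X} {c : ℕ} (hg : g ∈ degSub K X c)
    {p q w : FreeMonoid X} (hw : w ∈ (wd K X p * g * wd K X q).coeff.support) :
    w ≤ p * lm K X g * q := by
  obtain ⟨ps, hps, q', hq', rfl⟩ :=
    Finset.mem_mul.mp (MonoidAlgebra.support_coeff_mul_subset _ _ hw)
  obtain ⟨p', hp', s, hs, rfl⟩ :=
    Finset.mem_mul.mp (MonoidAlgebra.support_coeff_mul_subset _ _ hps)
  rw [support_wd, Finset.mem_singleton] at hp' hq'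
  subst hp' hq'
  have hg0 : g ≠ 0 := by rintro rfl; simp at hs
  exact mul_le_mul_of_wlen_eq ((hg s hs).trans (hg _ (lm_mem_support hg0)).symm) (le_lm hs) _ _

namespace IsRedOp

variable {m : ℕ} {T : F K X →ₗ[K] F K X}

theorem apply_apply (hT : IsRedOp K X m T) (x : F K X) : T (T x) = T x :=
  LinearMap.congr_fun hT.idem x

theorem apply_wd_eq_or_lt (hT : IsRedOp K X m T) (w : FreeMonoid X) :
    T (wd K X w) = wd K X w ∨ ∀ u ∈ (T (wd K X w)).coeff.support, u < w := by
  by_cases hw : wlen X w = m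
  · exact (hT.le w hw).imp_right And.right
  · exact Or.inl (hT.other w hw)

open Classical in
theorem coeff_apply (hT : IsRedOp K X m T) {y : F K X} {v : FreeMonoid X}
    (hv : ∀ w ∈ y.coeff.support, v < w → T (wd K X w) = wd K X w) :
    (T y).coeff v = if T (wd K X v) = wd K X v then y.coeff v else 0 := by
  have hterm : ∀ w ∈ y.coeff.support, y.coeff w * (T (wd K X w)).coeff v =
      if w = v then (if T (wd K X v) = wd K X v then y.coeff v else 0) else 0 := by
    intro w hw
    rcases hT.apply_wd_eq_or_lt w with hfix | hlt
    · rw [hfix, wd_eq_single, MonoidAlgebra.coeff_single, Finsupp.single_apply]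
      by_cases hwv : w = v
      · subst hwv; simp [hfix]
      · simp [hwv]
    · have hnot : (T (wd K X w)).coeff v = 0 := by
        by_contra h
        have hvw := hlt v (Finsupp.mem_support_iff.mpr h)
        rw [hv w hw hvw, wd_eq_single, MonoidAlgebra.coeff_single, Finsupp.single_apply,
          if_neg hvw.ne'] at h
        exact h rfl
      rw [hnot, mul_zero]
      by_cases hwv : w = v
      · subst hwv
        have hne : T (wd K X w) ≠ wd K X w := fun h => by
          rw [h, wd_eq_single, MonoidAlgebra.coeff_single, Finsupp.single_eq_same] at hnot
          exact one_ne_zero hnot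
        rw [if_pos rfl, if_neg hne]
      · rw [if_neg hwv]
  conv_lhs => rw [eq_sum_coeff_smul_wd y]
  simp only [map_sum, map_smul, MonoidAlgebra.coeff_sum, Finsupp.finsetSum_apply,
    MonoidAlgebra.coeff_smul_apply, smul_eq_mul]
  rw [Finset.sum_congr rfl hterm, Finset.sum_ite_eq']
  split_ifs <;> simp_all

theorem apply_wd_eq_of_mem_support (hT : IsRedOp K X m T) {y : F K X} (hy : T y = y)
    {w : FreeMonoid X} (hw : w ∈ y.coeff.support) : T (wd K X w) = wd K X w := by
  classical
  by_contra hne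
  set S := y.coeff.support.filter fun w => T (wd K X w) ≠ wd K X w
  have hS : S.Nonempty := ⟨w, Finset.mem_filter.mpr ⟨hw, hne⟩⟩
  obtain ⟨hvy, hvne⟩ := Finset.mem_filter.mp (S.max'_mem hS)
  have := hT.coeff_apply (y := y) (v := S.max' hS) fun u hu hlt => by
    by_contra h
    exact (S.le_max' u (Finset.mem_filter.mpr ⟨hu, h⟩)).not_gt hlt
  rw [if_neg hvne, hy] at this
  exact Finsupp.mem_support_iff.mp hvy this

theorem apply_wd_ne_of_apply_eq_zero (hT : IsRedOp K X m T) {y : F K X} (hy : T y = 0)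
    {v : FreeMonoid X} (hv : v ∈ y.coeff.support) (hmax : ∀ w ∈ y.coeff.support, w ≤ v) :
    T (wd K X v) ≠ wd K X v := by
  intro hfix
  have := hT.coeff_apply (y := y) (v := v) fun w hw hlt => absurd (hmax w hw) hlt.not_ge
  rw [if_pos hfix, hy] at this
  exact Finsupp.mem_support_iff.mp hv this.symm

theorem apply_wd_lm_ne_of_apply_eq_zero (hT : IsRedOp K X m T) {y : F K X} (hy : T y = 0)
    (h0 : y ≠ 0) : T (wd K X (lm K X y)) ≠ wd K X (lm K X y) :=
  hT.apply_wd_ne_of_apply_eq_zero hy (lm_mem_support h0) fun _ => le_lm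

theorem apply_sub_apply (hT : IsRedOp K X m T) (x : F K X) : T (x - T x) = 0 := by
  rw [map_sub, hT.apply_apply, sub_self]

theorem eq_one_of_ker_eq_bot (hT : IsRedOp K X m T) (h : LinearMap.ker T = ⊥) : T = 1 := by
  refine LinearMap.ext fun x => ?_
  have hx : x - T x ∈ LinearMap.ker T := hT.apply_sub_apply x
  rw [h, Submodule.mem_bot, sub_eq_zero] at hx
  exact hx.symm

end IsRedOp

section NormalWords

variable {R : Set (F K X)}

def IsReducibleWord (R : Set (F K X)) (u : FreeMonoid X) : Prop :=
  ∃ g ∈ R, ∃ a b : FreeMonoid X, u = a * lm K X g * b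

theorem isNormalForm_wd {u : FreeMonoid X} (h : ¬ IsReducibleWord R u) :
    IsNormalForm K X R (wd K X u) := by
  intro a b g hg
  change Finsupp.linearCombination K _ (Finsupp.single u (1 : K)) = _
  rw [Finsupp.linearCombination_single, one_smul, if_neg fun he => h ⟨g, hg, a, b, he⟩]

def HasIrreduciblePrefix (R : Set (F K X)) (d : ℕ) (w : FreeMonoid X) : Prop :=
  ∃ u s : FreeMonoid X, w = u * s ∧ wlen X u = d ∧ ¬ IsReducibleWord R u

theorem HasIrreduciblePrefix.mono {d e : ℕ} {w : FreeMonoid X} (hde : d ≤ e)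
    (h : HasIrreduciblePrefix R e w) : HasIrreduciblePrefix R d w := by
  obtain ⟨u, s, rfl, hu, hirr⟩ := h
  obtain ⟨u', s', rfl, hu'⟩ := exists_eq_mul_of_le_wlen (hu ▸ hde)
  refine ⟨u', s' * s, mul_assoc _ _ _, hu', ?_⟩
  rintro ⟨g, hg, a, b, rfl⟩
  exact hirr ⟨g, hg, a, b * s', by simp only [mul_assoc]⟩

end NormalWords

theorem lN_two_mul (N a : ℕ) : lN N (2 * a) = a * N := by
  simp [lN]

theorem lN_two_mul_add_one (N a : ℕ) : lN N (2 * a + 1) = a * N + 1 := by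
  rw [lN, if_neg (Nat.not_even_bit1 a), show (2 * a + 1) / 2 = a by omega]

theorem lN_le_lN_succ {N : ℕ} (hN : 0 < N) (n : ℕ) : lN N n ≤ lN N (n + 1) := by
  rcases Nat.even_or_odd' n with ⟨a, rfl | rfl⟩
  · rw [lN_two_mul, lN_two_mul_add_one]
    omega
  · rw [show 2 * a + 1 + 1 = 2 * (a + 1) by ring, lN_two_mul, lN_two_mul_add_one, add_mul]
    omega

theorem wd_mul_mul_wd_mem_idealPiece {N : ℕ} {R : Set (F K X)} {g : F K X} (hg : g ∈ R)
    (a b : FreeMonoid X) :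
    wd K X a * g * wd K X b ∈ idealPiece K X N R (wlen X a + N + wlen X b) := by
  rw [idealPiece, if_neg (by omega)]
  have hmem : wlen X a ∈ Finset.range (wlen X a + N + wlen X b - N + 1) := by
    rw [Finset.mem_range]; omega
  have hle := le_iSup₂ (f := fun i (_ : i ∈ Finset.range (wlen X a + N + wlen X b - N + 1)) =>
    degSub K X i * Submodule.span K R * degSub K X (wlen X a + N + wlen X b - N - i))
    (wlen X a) hmem
  rw [show wlen X a + N + wlen X b - N - wlen X a = wlen X b by omega] at hle
  exact hle (Submodule.mul_mem_mul (Submodule.mul_mem_mul (wd_mem_degSub a)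
    (Submodule.subset_span hg)) (wd_mem_degSub b))

theorem IsRedOp.hasIrreduciblePrefix_of_apply_wd_eq {N n m : ℕ} {R : Set (F K X)}
    {T : F K X →ₗ[K] F K X} (hN : 0 < N) (hhom : NHomogLC1 K X N R) (hT : IsRedOp K X m T)
    (hker : LinearMap.ker T = ker1 K X N R n m) {w : FreeMonoid X} (hw : wlen X w = m)
    (hfix : T (wd K X w) = wd K X w) : HasIrreduciblePrefix R (m - lN N n) w := by
  obtain ⟨u, v, rfl, hu⟩ := exists_eq_mul_of_le_wlen (Nat.sub_le (wlen X w) (lN N n))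
  rw [hw] at hu
  refine ⟨u, v, rfl, hu, ?_⟩
  rintro ⟨g, hg, a, b, rfl⟩
  have hg1 := (hhom g hg).2
  have hg0 : g ≠ 0 := by rintro rfl; simp at hg1
  have hlen : wlen X a + N + wlen X b = m - lN N n := by
    rw [← hu, wlen_mul, wlen_mul, (hhom g hg).1 _ (lm_mem_support hg0)]
  have hv : wlen X v = lN N n := by rw [wlen_mul] at hw; omega
  have hform : wd K X a * g * wd K X b * wd K X v = wd K X a * g * wd K X (b * v) := by
    rw [mul_assoc _ (wd K X b), wd_mul]
  have hzero : T (wd K X a * g * wd K X (b * v)) = 0 := by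
    rw [← LinearMap.mem_ker, hker, ← hform, ker1, ← hlen]
    exact Submodule.mul_mem_mul (wd_mul_mul_wd_mem_idealPiece hg a b) (hv ▸ wd_mem_degSub v)
  have hcoeff := coeff_wd_mul_mul_wd (K := K) g a (lm K X g) (b * v)
  rw [hg1] at hcoeff
  refine hT.apply_wd_ne_of_apply_eq_zero hzero ?_
    (fun _ hw' => le_of_mem_support_wd_mul_mul_wd (hhom g hg).1 hw') ?_
  · exact Finsupp.mem_support_iff.mpr (by rw [hcoeff]; exact one_ne_zero)
  · simpa only [mul_assoc] using hfix

noncomputable def leftQuot (u : FreeMonoid X) : F K X →ₗ[K] F K X :=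
  (MonoidAlgebra.coeffLinearEquiv K).symm.toLinearMap ∘ₗ
    Finsupp.lcomapDomain (u * ·) (mul_right_injective u) ∘ₗ
      (MonoidAlgebra.coeffLinearEquiv K).toLinearMap

theorem coeff_leftQuot (u : FreeMonoid X) (z : F K X) (s : FreeMonoid X) :
    (leftQuot u z).coeff s = z.coeff (u * s) :=
  rfl

theorem leftQuot_wd_mul {p u : FreeMonoid X} (h : wlen X p = wlen X u) (j : F K X) :
    leftQuot u (wd K X p * j) = if p = u then j else 0 := by
  ext s
  rw [coeff_leftQuot, wd_eq_single]
  split_ifs with hpu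
  · subst hpu; simp
  · rw [MonoidAlgebra.coeff_single_mul_of_forall_mul_ne]
    · rfl
    · exact fun t he => hpu (eq_of_mul_eq_mul_of_wlen_eq h he)

theorem degSub_mul_le_comap_leftQuot {d : ℕ} {J : Submodule K (F K X)} {u : FreeMonoid X}
    (hu : wlen X u = d) : degSub K X d * J ≤ J.comap (leftQuot u) := by
  rw [Submodule.mul_le]
  intro x hx j hj
  rw [eq_sum_coeff_smul_wd x, Finset.sum_mul]
  refine Submodule.sum_mem _ fun p hp => ?_
  rw [smul_mul_assoc]
  refine Submodule.smul_mem _ _ ?_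
  rw [Submodule.mem_comap, leftQuot_wd_mul ((hx p hp).trans hu.symm)]
  split_ifs
  exacts [hj, J.zero_mem]

open Classical in
theorem coeff_sub_wd_mul_leftQuot (u : FreeMonoid X) (z : F K X) (w : FreeMonoid X) :
    (z - wd K X u * leftQuot u z).coeff w = if ∃ s, w = u * s then 0 else z.coeff w := by
  rw [MonoidAlgebra.coeff_sub, Finsupp.sub_apply, wd_eq_single]
  split_ifs with h
  · obtain ⟨s, rfl⟩ := h
    simp [coeff_leftQuot]
  · rw [MonoidAlgebra.coeff_single_mul_of_forall_mul_ne _ _ fun s he => h ⟨s, he.symm⟩,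
      sub_zero]

theorem mem_nfSub_mul_of_apply_eq_zero {m d : ℕ} {J : Submodule K (F K X)} {R : Set (F K X)}
    {T : F K X →ₗ[K] F K X} (hT : IsRedOp K X m T) (hker : LinearMap.ker T = degSub K X d * J)
    {z : F K X} (hz : T z = 0)
    (hsupp : ∀ w ∈ z.coeff.support, HasIrreduciblePrefix R d w ∨ T (wd K X w) = wd K X w) :
    z ∈ nfSub K X R d * J := by
  induction hc : z.coeff.support.card using Nat.strong_induction_on generalizing z with
  | _ c ih =>
  by_cases h0 : z = 0
  · rw [h0]; exact Submodule.zero_mem _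
  obtain ⟨u, s, hus, hu, hirr⟩ :=
    (hsupp _ (lm_mem_support h0)).resolve_right (hT.apply_wd_lm_ne_of_apply_eq_zero hz h0)
  have hzJ : z ∈ degSub K X d * J := hker ▸ hz
  have hquot : leftQuot u z ∈ J := degSub_mul_le_comap_leftQuot hu hzJ
  have hpeel : wd K X u * leftQuot u z ∈ nfSub K X R d * J :=
    Submodule.mul_mem_mul (Submodule.subset_span ⟨u, hu, isNormalForm_wd hirr, rfl⟩) hquot
  have hpeel_ker : T (wd K X u * leftQuot u z) = 0 := by
    rw [← LinearMap.mem_ker, hker]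
    exact Submodule.mul_mem_mul (hu ▸ wd_mem_degSub u) hquot
  have hsub : (z - wd K X u * leftQuot u z).coeff.support ⊆ z.coeff.support.erase (lm K X z) := by
    intro w hw
    rw [Finsupp.mem_support_iff, coeff_sub_wd_mul_leftQuot] at hw
    split_ifs at hw with hpre
    · exact absurd rfl hw
    exact Finset.mem_erase.mpr ⟨fun he => hpre ⟨s, he.trans hus⟩, Finsupp.mem_support_iff.mpr hw⟩
  have hrest := ih _ ((Finset.card_le_card hsub).trans_lt
      (Finset.card_erase_lt_of_mem (lm_mem_support h0)) |>.trans_eq hc)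
    (by rw [map_sub, hz, hpeel_ker, sub_zero])
    (fun w hw => hsupp w (Finset.mem_of_mem_erase (hsub hw))) rfl
  simpa using Submodule.add_mem _ hrest hpeel

theorem sub_apply_apply_mem_nfSub_mul {N n m : ℕ} {R : Set (F K X)} {J : Submodule K (F K X)}
    {T1 T2 : F K X →ₗ[K] F K X} (hN : 0 < N) (hhom : NHomogLC1 K X N R)
    (hT1 : IsRedOp K X m T1) (hkT1 : LinearMap.ker T1 = ker1 K X N R n m)
    (hT2 : IsRedOp K X m T2) (hkT2 : LinearMap.ker T2 = degSub K X (m - lN N (n + 1)) * J)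
    (x : F K X) : T1 x - T2 (T1 x) ∈ nfSub K X R (m - lN N (n + 1)) * J := by
  refine mem_nfSub_mul_of_apply_eq_zero hT2 hkT2 (hT2.apply_sub_apply _) fun w hw => ?_
  rw [MonoidAlgebra.coeff_sub] at hw
  rcases Finset.mem_union.mp (Finsupp.support_sub hw) with hw | hw
  · by_cases hwm : wlen X w = m
    · have hfix := hT1.apply_wd_eq_of_mem_support (hT1.apply_apply x) hw
      exact .inl <| (hT1.hasIrreduciblePrefix_of_apply_wd_eq hN hhom hkT1 hwm hfix).mono
        (by have := lN_le_lN_succ hN n; omega)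
    · exact .inr (hT2.other w hwm)
  · exact .inr (hT2.apply_wd_eq_of_mem_support (hT2.apply_apply _) hw)

theorem Gamma_apply_mem {T1 T2 : F K X →ₗ[K] F K X} {S : Submodule K (F K X)}
    (hS : ∀ x, T1 x - T2 (T1 x) ∈ S) (k : ℕ) (f : F K X) : Gamma K X T1 T2 k f ∈ S := by
  rw [Gamma, Module.End.mul_apply, LinearMap.sum_apply, map_sum]
  refine Submodule.sum_mem _ fun i hi => ?_
  rw [altProd_of_odd _ _ (Finset.mem_filter.mp hi).2, Module.End.mul_apply, LinearMap.sub_apply,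
    Module.End.one_apply]
  exact hS _

end CC

open CC in
theorem stmt16_general (K : Type*) [Field K] (X : Type*) [LinearOrder X]
    (N : ℕ) (hN : 2 ≤ N) (R : Set (F K X))
    (hhom : NHomogLC1 K X N R)
    (n m : ℕ)
    (T1 T2 : F K X →ₗ[K] F K X)
    (hT1 : IsRedOp K X m T1) (hkT1 : LinearMap.ker T1 = ker1 K X N R n m)
    (hT2 : IsRedOp K X m T2) (hkT2 : LinearMap.ker T2 = ker2 K X N R n m)
    (k : ℕ) :
    (lN N (n + 1) ≤ m →
      ∀ f ∈ degSub K X m,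
        Gamma K X T1 T2 k f ∈ nfSub K X R (m - lN N (n + 1)) * Jspace K X N R (n + 1)) ∧
    (m < lN N (n + 1) → Gamma K X T1 T2 k = 0) := by
  refine ⟨fun hm f _ => ?_, fun hm => ?_⟩
  · have hker : LinearMap.ker T2 = degSub K X (m - lN N (n + 1)) * Jspace K X N R (n + 1) := by
      rw [hkT2, ker2, if_neg (not_lt.mpr hm)]
    exact Gamma_apply_mem
      (sub_apply_apply_mem_nfSub_mul (by omega) hhom hT1 hkT1 hT2 hker) k f
  · rw [Gamma, hT2.eq_one_of_ker_eq_bot (by rw [hkT2, ker2, if_pos hm]), sub_self, zero_mul]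

open CC in
/-- Suppose the reduced `N`-homogeneous presentation `⟨X|R⟩` is
side-confluent.  Let `n ≥ 0`, `m ≥ l_N(n)`, let `(T1, T2) = (F_1^{n,m}, F_2^{n,m})` be the
reduction pair of bi-degree `(n,m)`, let `k ≥ 1` satisfy `⟨T1,T2⟩^k = ⟨T2,T1⟩^k`, and set
`Γ^{n,m} = (id − T2)·Σ_{i odd, 1 ≤ i ≤ k−1} ⟨T2,T1⟩^i`.  If `m ≥ l_N(n+1)`, then the image
of `Γ^{n,m}` (on `V^{⊗m}`) is contained in `φ(V^{⊗m−l_N(n+1)}) ⊗ J_{n+1}` — the span of the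
elements `w·f` with `w` a normal word of length `m−l_N(n+1)` and `f ∈ J_{n+1}`; if
`m < l_N(n+1)`, then `Γ^{n,m} = 0`. -/
theorem stmt16 (K : Type*) [Field K] (X : Type*) [Fintype X] [LinearOrder X]
    (N : ℕ) (hN : 2 ≤ N) (R : Set (F K X))
    (hhom : NHomogLC1 K X N R) (hred : Reduced K X R)
    (hside : SideConfluent K X N R)
    (n m : ℕ) (hnm : lN N n ≤ m)
    (T1 T2 : F K X →ₗ[K] F K X)
    (hT1 : IsRedOp K X m T1) (hkT1 : LinearMap.ker T1 = ker1 K X N R n m)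
    (hT2 : IsRedOp K X m T2) (hkT2 : LinearMap.ker T2 = ker2 K X N R n m)
    (k : ℕ) (hk : 1 ≤ k) (hconf : altProd T1 T2 k = altProd T2 T1 k) :
    (lN N (n + 1) ≤ m →
      ∀ f ∈ degSub K X m,
        Gamma K X T1 T2 k f ∈ nfSub K X R (m - lN N (n + 1)) * Jspace K X N R (n + 1)) ∧
    (m < lN N (n + 1) → Gamma K X T1 T2 k = 0) :=
  stmt16_general K X N hN R hhom n m T1 T2 hT1 hkT1 hT2 hkT2 k
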